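/- Let Ω ⊆ ℝ² be open and let u : Ω → ℝ be a C³ solution of the two-dimensional minimal surface equation E(u) = 0 on Ω. Define v : Ω → ℝ by v(x,y) = u(x,y) − x·∂ₓu(x,y) − y·∂_yu(x,y) (the dilatation symmetry φ₄). Then for every point (x,y) ∈ Ω, the function ε ↦ E(u + εv)(x,y) is differentiable at ε = 0 with derivative 0. -/

import Mathlib

/-- Partial derivative in the `x` direction of a function on `ℝ²`. -/
noncomputable def px (f : ℝ × ℝ → ℝ) (z : ℝ × ℝ) : ℝ := fderiv ℝ f z (1, 0)

/-- Partial derivative in the `y` direction of a function on `ℝ²`. -/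
noncomputable def py (f : ℝ × ℝ → ℝ) (z : ℝ × ℝ) : ℝ := fderiv ℝ f z (0, 1)

/-- The two-dimensional minimal surface operator
`E(w) = (1 + w_y²)·w_xx − 2·w_x·w_y·w_xy + (1 + w_x²)·w_yy`. -/
noncomputable def msOp (w : ℝ × ℝ → ℝ) (z : ℝ × ℝ) : ℝ :=
  (1 + (py w z) ^ 2) * px (px w) z - 2 * px w z * py w z * py (px w) z
    + (1 + (px w z) ^ 2) * py (py w) z

/-!
Write `E(w) = F(∇w, D²w)` with `F = msSymbol`, a polynomial that is linear in `D²w`, and let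
`D = x ∂ₓ + y ∂_y`. For `v = u - D u` one computes `∇v = -D ∇u` and `D²v = -D²u - D D²u`.
Hence the linearization `dF(∇u, D²u)[∇v, D²v]` of `E` at `u` in the direction `v` equals
`-D (E u) - E u`, and both terms vanish when `E u = 0` near the point.
-/

open Filter Topology

section PartialDerivatives

variable {f g : ℝ × ℝ → ℝ} {z : ℝ × ℝ}

theorem Filter.EventuallyEq.px_eq (h : f =ᶠ[𝓝 z] g) : px f z = px g z := by
  rw [px, px, h.fderiv_eq]

theorem Filter.EventuallyEq.py_eq (h : f =ᶠ[𝓝 z] g) : py f z = py g z := by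
  rw [py, py, h.fderiv_eq]

theorem px_add_mul (hf : DifferentiableAt ℝ f z) (hg : DifferentiableAt ℝ g z) (c : ℝ) :
    px (fun w => f w + c * g w) z = px f z + c * px g z := by
  simp [px, fderiv_fun_add hf (hg.const_mul c), fderiv_const_mul hg]

theorem py_add_mul (hf : DifferentiableAt ℝ f z) (hg : DifferentiableAt ℝ g z) (c : ℝ) :
    py (fun w => f w + c * g w) z = py f z + c * py g z := by
  simp [py, fderiv_fun_add hf (hg.const_mul c), fderiv_const_mul hg]

theorem px_sub (hf : DifferentiableAt ℝ f z) (hg : DifferentiableAt ℝ g z) :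
    px (fun w => f w - g w) z = px f z - px g z := by
  simp [px, fderiv_fun_sub hf hg]

theorem py_sub (hf : DifferentiableAt ℝ f z) (hg : DifferentiableAt ℝ g z) :
    py (fun w => f w - g w) z = py f z - py g z := by
  simp [py, fderiv_fun_sub hf hg]

theorem px_neg : px (fun w => -f w) z = -px f z := by
  simp [px, fderiv_fun_neg]

theorem py_neg : py (fun w => -f w) z = -py f z := by
  simp [py, fderiv_fun_neg]

theorem ContDiffAt.px {n : WithTop ℕ∞} (hf : ContDiffAt ℝ (n + 1) f z) :
    ContDiffAt ℝ n (px f) z :=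
  (hf.fderiv_right le_rfl).clm_apply contDiffAt_const

theorem ContDiffAt.py {n : WithTop ℕ∞} (hf : ContDiffAt ℝ (n + 1) f z) :
    ContDiffAt ℝ n (py f) z :=
  (hf.fderiv_right le_rfl).clm_apply contDiffAt_const

theorem px_py_comm (hf : ContDiffAt ℝ 2 f z) : px (py f) z = py (px f) z := by
  have hd : DifferentiableAt ℝ (fderiv ℝ f) z :=
    (hf.fderiv_right (m := 1) (by norm_num)).differentiableAt (by norm_num)
  have hpartial (e : ℝ × ℝ) :
      fderiv ℝ (fun w => fderiv ℝ f w e) z = (fderiv ℝ (fderiv ℝ f) z).flip e := by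
    rw [fderiv_clm_apply hd (differentiableAt_const e)]
    simp
  change fderiv ℝ (fun w => fderiv ℝ f w (0, 1)) z (1, 0)
    = fderiv ℝ (fun w => fderiv ℝ f w (1, 0)) z (0, 1)
  rw [hpartial, hpartial]
  exact hf.isSymmSndFDerivAt (by simp) _ _

end PartialDerivatives

noncomputable def eulerOp (f : ℝ × ℝ → ℝ) (w : ℝ × ℝ) : ℝ := w.1 * px f w + w.2 * py f w

section EulerOperator

variable {f : ℝ × ℝ → ℝ} {z : ℝ × ℝ}

theorem fderiv_apply_self_eq_eulerOp : fderiv ℝ f z z = eulerOp f z := by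
  have hz : z = z.1 • ((1, 0) : ℝ × ℝ) + z.2 • (0, 1) := by ext <;> simp
  calc fderiv ℝ f z z = fderiv ℝ f z (z.1 • (1, 0) + z.2 • (0, 1)) := congrArg _ hz
    _ = eulerOp f z := by rw [map_add, map_smul, map_smul]; rfl

theorem ContDiffAt.eulerOp {n : WithTop ℕ∞} (hf : ContDiffAt ℝ (n + 1) f z) :
    ContDiffAt ℝ n (eulerOp f) z :=
  (contDiffAt_fst.mul hf.px).add (contDiffAt_snd.mul hf.py)

theorem fderiv_eulerOp_apply (hx : DifferentiableAt ℝ (px f) z)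
    (hy : DifferentiableAt ℝ (py f) z) (e : ℝ × ℝ) :
    fderiv ℝ (eulerOp f) z e
      = e.1 * px f z + z.1 * fderiv ℝ (px f) z e + (e.2 * py f z + z.2 * fderiv ℝ (py f) z e) := by
  have h := (hasFDerivAt_fst.fun_mul hx.hasFDerivAt).fun_add
    (hasFDerivAt_snd.fun_mul hy.hasFDerivAt)
  change fderiv ℝ (fun w => w.1 * px f w + w.2 * py f w) z e = _
  rw [h.fderiv]
  simp only [add_apply, smul_apply, smul_eq_mul,
    ContinuousLinearMap.coe_fst', ContinuousLinearMap.coe_snd']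
  ring

theorem px_eulerOp (hf : ContDiffAt ℝ 2 f z) : px (eulerOp f) z = px f z + eulerOp (px f) z := by
  have h := fderiv_eulerOp_apply (hf.px (n := 1)).differentiableAt_one
    (hf.py (n := 1)).differentiableAt_one (1, 0)
  unfold eulerOp at h ⊢
  rw [← px_py_comm hf]
  unfold px py at h ⊢
  linear_combination h

theorem py_eulerOp (hf : ContDiffAt ℝ 2 f z) : py (eulerOp f) z = py f z + eulerOp (py f) z := by
  have h := fderiv_eulerOp_apply (hf.px (n := 1)).differentiableAt_one
    (hf.py (n := 1)).differentiableAt_one (0, 1)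
  unfold eulerOp at h ⊢
  rw [px_py_comm hf]
  unfold px py at h ⊢
  linear_combination h

theorem px_sub_eulerOp (hf : ContDiffAt ℝ 2 f z) :
    px (fun w => f w - eulerOp f w) z = -eulerOp (px f) z := by
  rw [px_sub (hf.differentiableAt (by norm_num)) (hf.eulerOp (n := 1)).differentiableAt_one,
    px_eulerOp hf]
  ring

theorem py_sub_eulerOp (hf : ContDiffAt ℝ 2 f z) :
    py (fun w => f w - eulerOp f w) z = -eulerOp (py f) z := by
  rw [py_sub (hf.differentiableAt (by norm_num)) (hf.eulerOp (n := 1)).differentiableAt_one,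
    py_eulerOp hf]
  ring

end EulerOperator

def msSymbol (p q r s t : ℝ) : ℝ := (1 + q ^ 2) * r - 2 * p * q * s + (1 + p ^ 2) * t

/-- The differential of `msSymbol` at `(p, q, r, s, t)` applied to `(p', q', r', s', t')`. -/
def msLin (p q r s t p' q' r' s' t' : ℝ) : ℝ :=
  2 * q * q' * r + (1 + q ^ 2) * r' - 2 * (p' * q + p * q') * s - 2 * p * q * s'
    + 2 * p * p' * t + (1 + p ^ 2) * t'

theorem msOp_eq_msSymbol (w : ℝ × ℝ → ℝ) (z : ℝ × ℝ) :
    msOp w z = msSymbol (px w z) (py w z) (px (px w) z) (py (px w) z) (py (py w) z) :=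
  rfl

theorem hasDerivAt_msSymbol {p q r s t : ℝ → ℝ} {p' q' r' s' t' τ : ℝ}
    (hp : HasDerivAt p p' τ) (hq : HasDerivAt q q' τ) (hr : HasDerivAt r r' τ)
    (hs : HasDerivAt s s' τ) (ht : HasDerivAt t t' τ) :
    HasDerivAt (fun ε => msSymbol (p ε) (q ε) (r ε) (s ε) (t ε))
      (msLin (p τ) (q τ) (r τ) (s τ) (t τ) p' q' r' s' t') τ := by
  have h := ((((hq.fun_pow 2).const_add 1).fun_mul hr).fun_sub
    ((((hp.const_mul 2).fun_mul hq).fun_mul hs))).fun_add (((hp.fun_pow 2).const_add 1).fun_mul ht)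
  exact h.congr_deriv (by simp only [msLin]; ring)

section Linearization

variable {f g : ℝ × ℝ → ℝ} {z : ℝ × ℝ}

theorem msOp_add_mul (hf : ContDiffAt ℝ 2 f z) (hg : ContDiffAt ℝ 2 g z) (c : ℝ) :
    msOp (fun w => f w + c * g w) z
      = msSymbol (px f z + c * px g z) (py f z + c * py g z) (px (px f) z + c * px (px g) z)
          (py (px f) z + c * py (px g) z) (py (py f) z + c * py (py g) z) := by
  have hdiff : ∀ᶠ w in 𝓝 z, DifferentiableAt ℝ f w ∧ DifferentiableAt ℝ g w :=
    ((hf.eventually (by simp)).and (hg.eventually (by simp))).mono fun w h =>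
      ⟨h.1.differentiableAt (by simp), h.2.differentiableAt (by simp)⟩
  have hx : px (fun w => f w + c * g w) =ᶠ[𝓝 z] fun w => px f w + c * px g w :=
    hdiff.mono fun w h => px_add_mul h.1 h.2 c
  have hy : py (fun w => f w + c * g w) =ᶠ[𝓝 z] fun w => py f w + c * py g w :=
    hdiff.mono fun w h => py_add_mul h.1 h.2 c
  have hfx := (hf.px (n := 1)).differentiableAt_one
  have hfy := (hf.py (n := 1)).differentiableAt_one
  have hgx := (hg.px (n := 1)).differentiableAt_one
  have hgy := (hg.py (n := 1)).differentiableAt_one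
  rw [msOp_eq_msSymbol, hx.eq_of_nhds, hy.eq_of_nhds, hx.px_eq, hx.py_eq, hy.py_eq,
    px_add_mul hfx hgx, py_add_mul hfx hgx, py_add_mul hfy hgy]

theorem hasDerivAt_msOp_add_mul (hf : ContDiffAt ℝ 2 f z) (hg : ContDiffAt ℝ 2 g z) :
    HasDerivAt (fun ε => msOp (fun w => f w + ε * g w) z)
      (msLin (px f z) (py f z) (px (px f) z) (py (px f) z) (py (py f) z)
        (px g z) (py g z) (px (px g) z) (py (px g) z) (py (py g) z)) 0 := by
  have hline (a b : ℝ) : HasDerivAt (fun ε : ℝ => a + ε * b) b 0 := by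
    simpa using ((hasDerivAt_id 0).mul_const b).const_add a
  simp_rw [msOp_add_mul hf hg]
  simpa using hasDerivAt_msSymbol (hline _ _) (hline _ _) (hline _ _) (hline _ _) (hline _ _)

end Linearization

section Dilatation

variable {u : ℝ × ℝ → ℝ} {z : ℝ × ℝ}

theorem hasLineDerivAt_msOp (hu : ContDiffAt ℝ 3 u z) (e : ℝ × ℝ) :
    HasLineDerivAt ℝ (msOp u)
      (msLin (px u z) (py u z) (px (px u) z) (py (px u) z) (py (py u) z)
        (fderiv ℝ (px u) z e) (fderiv ℝ (py u) z e) (fderiv ℝ (px (px u)) z e)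
        (fderiv ℝ (py (px u)) z e) (fderiv ℝ (py (py u)) z e)) z e := by
  have hline {f : ℝ × ℝ → ℝ} (hf : DifferentiableAt ℝ f z) :
      HasDerivAt (fun τ : ℝ => f (z + τ • e)) (fderiv ℝ f z e) 0 :=
    hf.hasFDerivAt.hasLineDerivAt e
  have hux : ContDiffAt ℝ 2 (px u) z := hu.px
  have huy : ContDiffAt ℝ 2 (py u) z := hu.py
  have h := hasDerivAt_msSymbol (hline (hux.differentiableAt (by simp)))
    (hline (huy.differentiableAt (by simp))) (hline (hux.px (n := 1)).differentiableAt_one)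
    (hline (hux.py (n := 1)).differentiableAt_one) (hline (huy.py (n := 1)).differentiableAt_one)
  simp only [zero_smul, add_zero] at h
  exact h

/-- This is `eulerOp (msOp u) z = 0`, obtained by the chain rule along the ray through `z`. -/
theorem msLin_eulerOp_eq_zero (hu : ContDiffAt ℝ 3 u z) (hsol : ∀ᶠ w in 𝓝 z, msOp u w = 0) :
    msLin (px u z) (py u z) (px (px u) z) (py (px u) z) (py (py u) z)
      (eulerOp (px u) z) (eulerOp (py u) z) (eulerOp (px (px u)) z)
      (eulerOp (py (px u)) z) (eulerOp (py (py u)) z) = 0 := by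
  have h := hasLineDerivAt_msOp hu z
  simp only [fderiv_apply_self_eq_eulerOp] at h
  have h0 : HasLineDerivAt ℝ (msOp u) 0 z z := by
    simpa using ((hasFDerivAt_const (0 : ℝ) z).hasLineDerivAt z).congr_of_eventuallyEq hsol
  exact h.unique h0

theorem msLin_sub_eulerOp (hu : ContDiffAt ℝ 3 u z) :
    msLin (px u z) (py u z) (px (px u) z) (py (px u) z) (py (py u) z)
        (px (fun w => u w - eulerOp u w) z) (py (fun w => u w - eulerOp u w) z)
        (px (px (fun w => u w - eulerOp u w)) z) (py (px (fun w => u w - eulerOp u w)) z)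
        (py (py (fun w => u w - eulerOp u w)) z)
      = -msLin (px u z) (py u z) (px (px u) z) (py (px u) z) (py (py u) z)
          (eulerOp (px u) z) (eulerOp (py u) z) (eulerOp (px (px u)) z)
          (eulerOp (py (px u)) z) (eulerOp (py (py u)) z)
        - msOp u z := by
  have hu2 : ∀ᶠ w in 𝓝 z, ContDiffAt ℝ 2 u w :=
    (hu.eventually (by simp)).mono fun w hw => hw.of_le (by norm_num)
  have hx : px (fun w => u w - eulerOp u w) =ᶠ[𝓝 z] fun w => -eulerOp (px u) w :=
    hu2.mono fun w hw => px_sub_eulerOp hw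
  have hy : py (fun w => u w - eulerOp u w) =ᶠ[𝓝 z] fun w => -eulerOp (py u) w :=
    hu2.mono fun w hw => py_sub_eulerOp hw
  have hux : ContDiffAt ℝ 2 (px u) z := hu.px
  have huy : ContDiffAt ℝ 2 (py u) z := hu.py
  rw [hx.eq_of_nhds, hy.eq_of_nhds, hx.px_eq, hx.py_eq, hy.py_eq, px_neg, py_neg, py_neg,
    px_eulerOp hux, py_eulerOp hux, py_eulerOp huy, msOp_eq_msSymbol]
  -- `msSymbol` is linear in `(r, s, t)`, so `msLin p q r s t 0 0 r s t = msSymbol p q r s t`.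
  simp only [msLin, msSymbol]
  ring

end Dilatation

/-- The dilatation `φ₄ = u − x·u_x − y·u_y` is an infinitesimal symmetry of the
two-dimensional minimal surface equation at every `C³` solution `u`. -/
theorem dilatation_is_infinitesimal_symmetry
    (Ω : Set (ℝ × ℝ)) (hΩ : IsOpen Ω) (u : ℝ × ℝ → ℝ)
    (hu : ContDiffOn ℝ 3 u Ω) (hsol : ∀ z ∈ Ω, msOp u z = 0) :
    ∀ z ∈ Ω, HasDerivAt
      (fun ε : ℝ => msOp (fun w => u w + ε * (u w - w.1 * px u w - w.2 * py u w)) z) 0 0 := by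
  intro z hz
  have hΩz : Ω ∈ 𝓝 z := hΩ.mem_nhds hz
  have hu3 : ContDiffAt ℝ 3 u z := hu.contDiffAt hΩz
  have hv : ContDiffAt ℝ 2 (fun w => u w - eulerOp u w) z :=
    (hu3.of_le (by norm_num)).sub hu3.eulerOp
  simp only [sub_sub]
  refine (hasDerivAt_msOp_add_mul (hu3.of_le (by norm_num)) hv).congr_deriv ?_
  rw [msLin_sub_eulerOp hu3, msLin_eulerOp_eq_zero hu3 (eventually_of_mem hΩz hsol), hsol z hz,
    neg_zero, sub_zero]
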